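/- arXiv:2204.02065 — 5 statements merged into one kernel-verified Lean document; each statement's English description precedes it below -/
import Mathlib

section
/- For n = 4k+2, there is no element α ∈ B_n(ℝ²) of the form α = w g^{2k+1} with w ∈ P_n(ℝ²), and no β ∈ B_n(ℝ²), such that αβαβ⁻¹ = 1, where g = σ₁⋯σ_{n-1}. -/
/-- Defining relators for the Artin braid group `B_n` on generators `σ_1, …, σ_{n-1}`
(generators indexed by `ℕ`; the irrelevant generators `σ_0` and `σ_i` for `i ≥ n` are killed). -/
def braidRels (n : ℕ) : Set (FreeGroup ℕ) :=
  { r | (∃ i : ℕ, (i = 0 ∨ n ≤ i) ∧ r = FreeGroup.of i) ∨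
        (∃ i j : ℕ, 1 ≤ i ∧ i + 2 ≤ j ∧ j ≤ n - 1 ∧
          r = FreeGroup.of i * FreeGroup.of j * (FreeGroup.of i)⁻¹ * (FreeGroup.of j)⁻¹) ∨
        (∃ i : ℕ, 1 ≤ i ∧ i + 2 ≤ n ∧
          r = FreeGroup.of i * FreeGroup.of (i + 1) * FreeGroup.of i *
              (FreeGroup.of (i + 1) * FreeGroup.of i * FreeGroup.of (i + 1))⁻¹) }

/-- The Artin braid group `B_n = B_n(ℝ²)`, as the group presented by the generators
`σ_1, …, σ_{n-1}` subject to the braid relations. -/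
abbrev BraidGroup (n : ℕ) : Type := PresentedGroup (braidRels n)

/-- The Artin generator `σ_i` of `B_n`. -/
def braidσ (n i : ℕ) : BraidGroup n := PresentedGroup.of i

/-- The braid `g = σ₁ σ₂ ⋯ σ_{n-1} ∈ B_n`. -/
def braidg (n : ℕ) : BraidGroup n := ((List.range' 1 (n - 1)).map (braidσ n)).prod

/-- The pure braid generator `A_{i,j} = σ_{j-1}⋯σ_{i+1} σ_i² σ_{i+1}⁻¹⋯σ_{j-1}⁻¹ ∈ B_n`. -/
def braidA (n i j : ℕ) : BraidGroup n :=
  (((List.range' (i + 1) (j - 1 - i)).map (braidσ n)).reverse.prod) * (braidσ n i) ^ 2 *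
    (((List.range' (i + 1) (j - 1 - i)).map (braidσ n)).reverse.prod)⁻¹

section Helpers

lemma comm_rel {G : Type*} [Group G] {a b : G} (h : Commute a b) :
    a * b * a⁻¹ * b⁻¹ = 1 := by rw [h.eq]; group

lemma my_swap_commute {α : Type*} [DecidableEq α] {a b c d : α}
    (hac : a ≠ c) (had : a ≠ d) (hbc : b ≠ c) (hbd : b ≠ d) :
    Commute (Equiv.swap a b) (Equiv.swap c d) := by
  unfold Commute SemiconjBy
  ext x
  simp only [Equiv.Perm.mul_apply, Equiv.swap_apply_def]
  split_ifs <;> simp_all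

lemma my_swap_braid {α : Type*} [DecidableEq α] {a b c : α}
    (hab : a ≠ b) (hbc : b ≠ c) (hac : a ≠ c) :
    Equiv.swap a b * Equiv.swap b c * Equiv.swap a b =
      Equiv.swap b c * Equiv.swap a b * Equiv.swap b c := by
  have h1 := Equiv.swap_mul_swap_mul_swap (x := c) (y := b) (z := a) hbc.symm hac.symm
  rw [Equiv.swap_comm b a, Equiv.swap_comm c b] at h1
  have h2 := Equiv.swap_mul_swap_mul_swap (x := a) (y := b) (z := c) hab hac
  rw [h1, h2, Equiv.swap_comm]

lemma viaEmbedding_swap {α β : Type*} [DecidableEq α] [DecidableEq β]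
    (ι : α ↪ β) (a b : α) :
    Equiv.Perm.viaEmbedding (Equiv.swap a b) ι = Equiv.swap (ι a) (ι b) := by
  ext x
  by_cases hx : x ∈ Set.range ι
  · obtain ⟨y, rfl⟩ := hx
    rw [Equiv.Perm.viaEmbedding_apply]
    rcases eq_or_ne y a with rfl | hya
    · simp
    rcases eq_or_ne y b with rfl | hyb
    · simp
    rw [Equiv.swap_apply_of_ne_of_ne hya hyb,
        Equiv.swap_apply_of_ne_of_ne (fun h => hya (ι.injective h))
          (fun h => hyb (ι.injective h))]
  · rw [Equiv.Perm.viaEmbedding_apply_of_notMem _ _ x hx,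
        Equiv.swap_apply_of_ne_of_ne (fun h => hx ⟨a, h.symm⟩) (fun h => hx ⟨b, h.symm⟩)]

lemma braidσ_eq_one {n i : ℕ} (h : i = 0 ∨ n ≤ i) : braidσ n i = 1 := by
  have : FreeGroup.of i ∈ Subgroup.normalClosure (braidRels n) :=
    Subgroup.subset_normalClosure (Or.inl ⟨i, h, rfl⟩)
  exact (QuotientGroup.eq_one_iff _).mpr this

end Helpers

section Maps
variable (k : ℕ)

/-- exponent sum map on generators -/
def expMap : ℕ → Multiplicative ℤ :=
  fun i => if 1 ≤ i ∧ i ≤ 4 * k + 1 then Multiplicative.ofAdd 1 else 1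

/-- permutation map on generators -/
noncomputable def permMap : ℕ → Equiv.Perm ℕ :=
  fun i => if 1 ≤ i ∧ i ≤ 4 * k + 1 then Equiv.swap i (i + 1) else 1

/-- finite permutation map on generators -/
noncomputable def finMap : ℕ → Equiv.Perm (Fin (4 * k + 3)) :=
  fun i => if h : 1 ≤ i ∧ i ≤ 4 * k + 1 then
    Equiv.swap ⟨i, by omega⟩ ⟨i + 1, by omega⟩ else 1

/-- sign map on generators -/
def signMap : ℕ → ℤˣ :=
  fun i => if 1 ≤ i ∧ i ≤ 4 * k + 1 then -1 else 1

lemma expMap_rels : ∀ r ∈ braidRels (4 * k + 2), FreeGroup.lift (expMap k) r = 1 := by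
  rintro r (⟨i, hi, rfl⟩ | ⟨i, j, hi, hij, hj, rfl⟩ | ⟨i, hi, hin, rfl⟩)
  · rw [FreeGroup.lift_apply_of, expMap, if_neg (by omega)]
  · simp only [map_mul, map_inv, FreeGroup.lift_apply_of]
    exact comm_rel (mul_comm _ _)
  · simp only [map_mul, map_inv, FreeGroup.lift_apply_of, expMap,
      if_pos (show 1 ≤ i ∧ i ≤ 4 * k + 1 by omega),
      if_pos (show 1 ≤ i + 1 ∧ i + 1 ≤ 4 * k + 1 by omega)]
    group

lemma permMap_rels : ∀ r ∈ braidRels (4 * k + 2), FreeGroup.lift (permMap k) r = 1 := by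
  rintro r (⟨i, hi, rfl⟩ | ⟨i, j, hi, hij, hj, rfl⟩ | ⟨i, hi, hin, rfl⟩)
  · rw [FreeGroup.lift_apply_of, permMap, if_neg (by omega)]
  · simp only [map_mul, map_inv, FreeGroup.lift_apply_of, permMap,
      if_pos (show 1 ≤ i ∧ i ≤ 4 * k + 1 by omega),
      if_pos (show 1 ≤ j ∧ j ≤ 4 * k + 1 by omega)]
    exact comm_rel (my_swap_commute (by omega) (by omega) (by omega) (by omega))
  · simp only [map_mul, map_inv, FreeGroup.lift_apply_of, permMap,
      if_pos (show 1 ≤ i ∧ i ≤ 4 * k + 1 by omega),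
      if_pos (show 1 ≤ i + 1 ∧ i + 1 ≤ 4 * k + 1 by omega)]
    rw [mul_inv_eq_one]
    exact my_swap_braid (by omega) (by omega) (by omega)

lemma finMap_rels : ∀ r ∈ braidRels (4 * k + 2), FreeGroup.lift (finMap k) r = 1 := by
  rintro r (⟨i, hi, rfl⟩ | ⟨i, j, hi, hij, hj, rfl⟩ | ⟨i, hi, hin, rfl⟩)
  · rw [FreeGroup.lift_apply_of, finMap, dif_neg (by omega)]
  · simp only [map_mul, map_inv, FreeGroup.lift_apply_of, finMap,
      dif_pos (show 1 ≤ i ∧ i ≤ 4 * k + 1 by omega),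
      dif_pos (show 1 ≤ j ∧ j ≤ 4 * k + 1 by omega)]
    refine comm_rel (my_swap_commute ?_ ?_ ?_ ?_) <;>
      exact fun h => by simp only [Fin.mk.injEq] at h; omega
  · simp only [map_mul, map_inv, FreeGroup.lift_apply_of, finMap,
      dif_pos (show 1 ≤ i ∧ i ≤ 4 * k + 1 by omega),
      dif_pos (show 1 ≤ i + 1 ∧ i + 1 ≤ 4 * k + 1 by omega)]
    rw [mul_inv_eq_one]
    refine my_swap_braid ?_ ?_ ?_ <;>
      exact fun h => by simp only [Fin.mk.injEq] at h; omega

lemma signMap_rels : ∀ r ∈ braidRels (4 * k + 2), FreeGroup.lift (signMap k) r = 1 := by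
  rintro r (⟨i, hi, rfl⟩ | ⟨i, j, hi, hij, hj, rfl⟩ | ⟨i, hi, hin, rfl⟩)
  · rw [FreeGroup.lift_apply_of, signMap, if_neg (by omega)]
  · simp only [map_mul, map_inv, FreeGroup.lift_apply_of]
    exact comm_rel (mul_comm _ _)
  · simp only [map_mul, map_inv, FreeGroup.lift_apply_of, signMap,
      if_pos (show 1 ≤ i ∧ i ≤ 4 * k + 1 by omega),
      if_pos (show 1 ≤ i + 1 ∧ i + 1 ≤ 4 * k + 1 by omega)]
    group

end Maps

/-- for `n = 4k+2`, there is no element `α ∈ B_n(ℝ²)` of the form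
`α = w g^{2k+1}` with `w` a pure braid (an element of the kernel of the permutation
homomorphism `π : B_n(ℝ²) → Σ_n`), and no `β ∈ B_n(ℝ²)`, such that `αβαβ⁻¹ = 1`,
where `g = σ₁⋯σ_{n-1}`. -/
theorem statement10 (k : ℕ) (π : BraidGroup (4 * k + 2) →* Equiv.Perm ℕ)
    (hπ : ∀ i : ℕ, 1 ≤ i → i ≤ 4 * k + 1 →
      π (braidσ (4 * k + 2) i) = Equiv.swap i (i + 1)) :
    ¬ ∃ w β : BraidGroup (4 * k + 2), w ∈ π.ker ∧
        (w * (braidg (4 * k + 2)) ^ (2 * k + 1)) * β *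
          (w * (braidg (4 * k + 2)) ^ (2 * k + 1)) * β⁻¹ = 1 := by
  rintro ⟨w, β, hw, hrel⟩
  set e : BraidGroup (4 * k + 2) →* Multiplicative ℤ :=
    PresentedGroup.toGroup (expMap_rels k) with he
  set Ψ : BraidGroup (4 * k + 2) →* Equiv.Perm (Fin (4 * k + 3)) :=
    PresentedGroup.toGroup (finMap_rels k) with hΨ
  -- exponent sum of g
  have heg : e (braidg (4 * k + 2)) = (Multiplicative.ofAdd (1 : ℤ)) ^ (4 * k + 1) := by
    rw [braidg, map_list_prod, List.map_map]
    rw [List.prod_eq_pow_card _ (Multiplicative.ofAdd (1 : ℤ)) ?_]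
    · rw [List.length_map, List.length_range']
      norm_num
    · intro x hx
      simp only [List.mem_map, List.mem_range'_1] at hx
      obtain ⟨i, hi, rfl⟩ := hx
      show e (braidσ _ i) = _
      rw [braidσ, he, PresentedGroup.toGroup.of, expMap, if_pos (by omega)]
  -- exponent sum of w is odd
  have hm : Multiplicative.toAdd (e w) = -((2 * k + 1) * (4 * k + 1) : ℤ) := by
    have h1 := congrArg e hrel
    simp only [map_mul, map_pow, map_inv, map_one, heg] at h1
    have h2 := congrArg Multiplicative.toAdd h1
    simp only [toAdd_mul, toAdd_pow, toAdd_inv, toAdd_one, toAdd_ofAdd, smul_eq_mul,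
      nsmul_eq_mul, mul_one] at h2
    push_cast at h2 ⊢
    ring_nf at h2 ⊢
    linarith
  have hodd : Odd (Multiplicative.toAdd (e w)) := by
    refine ⟨-(4 * (k : ℤ) ^ 2 + 3 * k + 1), ?_⟩
    rw [hm]; push_cast; ring
  -- π factors through Ψ
  have hπσ : ∀ i : ℕ, π (PresentedGroup.of i) = permMap k i := by
    intro i
    by_cases h : 1 ≤ i ∧ i ≤ 4 * k + 1
    · rw [permMap, if_pos h]; exact hπ i h.1 h.2
    · rw [permMap, if_neg h]
      have : braidσ (4 * k + 2) i = 1 := braidσ_eq_one (by omega)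
      rw [braidσ] at this
      rw [this, map_one]
  have hcompσ : ∀ i : ℕ,
      ((Equiv.Perm.viaEmbeddingHom Fin.valEmbedding).comp Ψ) (PresentedGroup.of i) =
        permMap k i := by
    intro i
    rw [MonoidHom.comp_apply, hΨ, PresentedGroup.toGroup.of, finMap, permMap]
    by_cases h : 1 ≤ i ∧ i ≤ 4 * k + 1
    · rw [dif_pos h, if_pos h, Equiv.Perm.viaEmbeddingHom_apply, viaEmbedding_swap]
      rfl
    · rw [dif_neg h, if_neg h, map_one]
  have hπΨ : ∀ x, π x = Equiv.Perm.viaEmbeddingHom Fin.valEmbedding (Ψ x) := by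
    intro x
    rw [PresentedGroup.toGroup.unique (permMap_rels k) π hπσ,
      ← PresentedGroup.toGroup.unique (permMap_rels k) _ hcompσ]
    rfl
  -- Ψ w = 1
  have hΨw : Ψ w = 1 := by
    apply Equiv.Perm.viaEmbeddingHom_injective Fin.valEmbedding
    rw [← hπΨ, map_one]
    exact hw
  -- sign of Ψ agrees with (-1)^(exponent sum)
  have hsignσ : ∀ i : ℕ,
      (Equiv.Perm.sign.comp Ψ) (PresentedGroup.of i) = signMap k i := by
    intro i
    rw [MonoidHom.comp_apply, hΨ, PresentedGroup.toGroup.of, finMap, signMap]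
    by_cases h : 1 ≤ i ∧ i ≤ 4 * k + 1
    · rw [dif_pos h, if_pos h]
      exact Equiv.Perm.sign_swap
        (fun hh => by simp only [Fin.mk.injEq] at hh; omega)
    · rw [dif_neg h, if_neg h, map_one]
  have hzpowσ : ∀ i : ℕ,
      ((zpowersHom ℤˣ (-1)).comp e) (PresentedGroup.of i) = signMap k i := by
    intro i
    rw [MonoidHom.comp_apply, he, PresentedGroup.toGroup.of, expMap, signMap,
      zpowersHom_apply]
    by_cases h : 1 ≤ i ∧ i ≤ 4 * k + 1
    · rw [if_pos h, if_pos h]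
      simp
    · rw [if_neg h, if_neg h]
      simp
  have hsign : Equiv.Perm.sign (Ψ w) = (-1 : ℤˣ) ^ (Multiplicative.toAdd (e w)) := by
    have h1 := PresentedGroup.toGroup.unique (signMap_rels k) _ hsignσ (x := w)
    have h2 := PresentedGroup.toGroup.unique (signMap_rels k) _ hzpowσ (x := w)
    have := h1.trans h2.symm
    simpa [zpowersHom_apply] using this
  rw [hΨw, map_one] at hsign
  obtain ⟨c, hc⟩ := hodd
  rw [hc, zpow_add, zpow_mul, zpow_one, zpow_two, neg_mul_neg, one_mul, one_zpow] at hsign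
  exact absurd hsign (by decide)
end

section
/- In the Klein bottle group K = ⟨u, v | u v u v⁻¹ = 1⟩, the subgroup generated by x := u v^{2k} and y := v^{4k} is isomorphic to ℤ² (x and y commute and generate a free abelian group of rank 2), and it equals the kernel of the homomorphism θ : K → ℤ/(4k) defined by θ(u) = 2k and θ(v) = 1. -/
/-- The single defining relator `u v u v⁻¹` of the Klein bottle group, on two generators
(`u` indexed by `true`, `v` indexed by `false`). -/
def kleinRels : Set (FreeGroup Bool) :=
  { FreeGroup.of true * FreeGroup.of false * FreeGroup.of true * (FreeGroup.of false)⁻¹ }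

/-- The Klein bottle group `K = ⟨u, v | u v u v⁻¹ = 1⟩`. -/
abbrev KleinGroup : Type := PresentedGroup kleinRels

/-- The generator `u` of the Klein bottle group. -/
def kleinU : KleinGroup := PresentedGroup.of true

/-- The generator `v` of the Klein bottle group. -/
def kleinV : KleinGroup := PresentedGroup.of false

/-! Conjugation by `v` inverts `u`, so `u` commutes with `v²` and every element of `K` can be
written `u^a v^b`, uniquely: `b` is read off by the homomorphism `K → ℤ`, `u ↦ 0`, `v ↦ 1`, and
then `a` by the homomorphism onto the infinite dihedral group, `u ↦ r 1`, `v ↦ sr 0`.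
In this normal form `x^m y^l = u^m v^{2km + 4kl}`, so `x` and `y` commute and are independent, and
`θ (u^a v^b) = 2ka + b mod 4k` vanishes exactly when `b = 2ka + 4ks`, i.e. `u^a v^b = x^a y^{s-a}`. -/

namespace Commute

variable {G : Type*} [Group G] {x y : G}

def zpowPairHom (h : Commute x y) : Multiplicative (ℤ × ℤ) →* G where
  toFun p := x ^ p.toAdd.1 * y ^ p.toAdd.2
  map_one' := by simp
  map_mul' p q := by
    simp only [toAdd_mul, Prod.fst_add, Prod.snd_add, zpow_add]
    exact (h.zpow_zpow _ _).mul_mul_mul_comm _ _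

lemma zpowPairHom_apply (h : Commute x y) (p : Multiplicative (ℤ × ℤ)) :
    h.zpowPairHom p = x ^ p.toAdd.1 * y ^ p.toAdd.2 :=
  rfl

lemma range_zpowPairHom (h : Commute x y) : h.zpowPairHom.range = Subgroup.closure {x, y} := by
  apply le_antisymm
  · rintro _ ⟨p, rfl⟩
    exact mul_mem (zpow_mem (Subgroup.subset_closure (by simp)) _)
      (zpow_mem (Subgroup.subset_closure (by simp)) _)
  · rw [Subgroup.closure_le]
    rintro _ (rfl | rfl)
    · exact ⟨.ofAdd (1, 0), by simp [zpowPairHom_apply]⟩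
    · exact ⟨.ofAdd (0, 1), by simp [zpowPairHom_apply]⟩

lemma injective_zpowPairHom (h : Commute x y)
    (hind : ∀ m l : ℤ, x ^ m * y ^ l = 1 → m = 0 ∧ l = 0) : Function.Injective h.zpowPairHom := by
  rw [injective_iff_map_eq_one]
  intro p hp
  obtain ⟨hm, hl⟩ := hind _ _ hp
  exact Multiplicative.toAdd.injective (Prod.ext hm hl)

noncomputable def closurePairMulEquiv (h : Commute x y)
    (hind : ∀ m l : ℤ, x ^ m * y ^ l = 1 → m = 0 ∧ l = 0) :
    Subgroup.closure {x, y} ≃* Multiplicative (ℤ × ℤ) :=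
  (MulEquiv.subgroupCongr h.range_zpowPairHom.symm).trans
    (MonoidHom.ofInjective (h.injective_zpowPairHom hind)).symm

end Commute

lemma kleinU_mul_kleinV_mul_kleinU_mul_inv_kleinV : kleinU * kleinV * kleinU * kleinV⁻¹ = 1 := by
  simpa [kleinU, kleinV, PresentedGroup.of] using
    PresentedGroup.one_of_mem (rels := kleinRels) rfl

section Lift

variable {G : Type*} [Group G]

def kleinLift (a b : G) (h : a * b * a * b⁻¹ = 1) : KleinGroup →* G :=
  PresentedGroup.toGroup (f := fun i => bif i then a else b) (by rintro r rfl; simpa using h)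

@[simp]
lemma kleinLift_kleinU (a b : G) (h : a * b * a * b⁻¹ = 1) : kleinLift a b h kleinU = a :=
  PresentedGroup.toGroup.of _

@[simp]
lemma kleinLift_kleinV (a b : G) (h : a * b * a * b⁻¹ = 1) : kleinLift a b h kleinV = b :=
  PresentedGroup.toGroup.of _

end Lift

lemma kleinV_mul_kleinU_mul_inv_kleinV : kleinV * kleinU * kleinV⁻¹ = kleinU⁻¹ :=
  eq_inv_of_mul_eq_one_right <| by
    simpa only [mul_assoc] using kleinU_mul_kleinV_mul_kleinU_mul_inv_kleinV

lemma kleinV_mul_kleinU_zpow (a : ℤ) : kleinV * kleinU ^ a = kleinU ^ (-a) * kleinV := by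
  have h : kleinV * kleinU ^ a * kleinV⁻¹ = kleinU ^ (-a) := by
    rw [← conj_zpow, kleinV_mul_kleinU_mul_inv_kleinV, inv_zpow, zpow_neg]
  rw [← h, inv_mul_cancel_right]

lemma inv_kleinV_mul_kleinU_zpow (a : ℤ) : kleinV⁻¹ * kleinU ^ a = kleinU ^ (-a) * kleinV⁻¹ := by
  rw [inv_mul_eq_iff_eq_mul, ← mul_assoc, kleinV_mul_kleinU_zpow, neg_neg, mul_inv_cancel_right]

lemma commute_kleinU_kleinV_sq : Commute kleinU (kleinV ^ 2) := by
  have h := kleinV_mul_kleinU_zpow 1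
  rw [zpow_one] at h
  calc kleinU * kleinV ^ 2 = kleinV * kleinU ^ (-1 : ℤ) * kleinV := by
        rw [kleinV_mul_kleinU_zpow, neg_neg, zpow_one, sq, mul_assoc]
    _ = kleinV ^ 2 * kleinU := by rw [mul_assoc, ← h, ← mul_assoc, sq]

lemma exists_eq_kleinU_zpow_mul_kleinV_zpow (g : KleinGroup) :
    ∃ a b : ℤ, g = kleinU ^ a * kleinV ^ b := by
  have hg : g ∈ Subgroup.closure (Set.range PresentedGroup.of) := by
    rw [PresentedGroup.closure_range_of]; trivial
  induction hg using Subgroup.closure_induction_left with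
  | one => exact ⟨0, 0, by simp⟩
  | mul_left _ hx _ _ ih =>
    obtain ⟨i, rfl⟩ := hx
    obtain ⟨a, b, rfl⟩ := ih
    cases i
    · exact ⟨-a, 1 + b, by
        rw [← mul_assoc, ← kleinV, kleinV_mul_kleinU_zpow, mul_assoc, ← zpow_one_add]⟩
    · exact ⟨1 + a, b, by rw [zpow_one_add, mul_assoc]; rfl⟩
  | inv_mul_cancel _ hx _ _ ih =>
    obtain ⟨i, rfl⟩ := hx
    obtain ⟨a, b, rfl⟩ := ih
    cases i
    · exact ⟨-a, -1 + b, by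
        rw [← mul_assoc, ← kleinV, inv_kleinV_mul_kleinU_zpow, mul_assoc, zpow_add, zpow_neg_one]⟩
    · exact ⟨-1 + a, b, by rw [zpow_add, zpow_neg_one, mul_assoc]; rfl⟩

def kleinToDihedral : KleinGroup →* DihedralGroup 0 :=
  kleinLift (.r 1) (.sr 0) (by simp [DihedralGroup.r_mul_sr, DihedralGroup.sr_mul_r])

def kleinVExponent : KleinGroup →* Multiplicative ℤ :=
  kleinLift 1 (.ofAdd 1) (by simp)

lemma kleinU_zpow_mul_kleinV_zpow_eq_one_iff {a b : ℤ} :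
    kleinU ^ a * kleinV ^ b = 1 ↔ a = 0 ∧ b = 0 := by
  refine ⟨fun h => ?_, by rintro ⟨rfl, rfl⟩; simp⟩
  obtain rfl : b = 0 := by simpa [kleinVExponent] using congrArg kleinVExponent h
  have ha := congrArg kleinToDihedral h
  simp only [kleinToDihedral, zpow_zero, mul_one, map_zpow, map_one, kleinLift_kleinU,
    DihedralGroup.r_one_zpow, ← DihedralGroup.r_zero, DihedralGroup.r.injEq] at ha
  exact ⟨ha, rfl⟩

section KernelOfTheta

variable (k : ℕ)

lemma commute_kleinU_kleinV_pow_two_mul : Commute kleinU (kleinV ^ (2 * k)) := by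
  rw [pow_mul]
  exact commute_kleinU_kleinV_sq.pow_right k

lemma commute_kleinU_mul_kleinV_pow_kleinV_pow :
    Commute (kleinU * kleinV ^ (2 * k)) (kleinV ^ (4 * k)) := by
  have hu : Commute kleinU (kleinV ^ (4 * k)) := by
    rw [show 4 * k = 2 * (2 * k) by ring]
    exact commute_kleinU_kleinV_pow_two_mul (2 * k)
  exact hu.mul_left ((Commute.refl kleinV).pow_pow _ _)

lemma kleinU_mul_kleinV_pow_zpow_mul_kleinV_pow_zpow (m l : ℤ) :
    (kleinU * kleinV ^ (2 * k)) ^ m * (kleinV ^ (4 * k)) ^ l =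
      kleinU ^ m * kleinV ^ (2 * k * m + 4 * k * l : ℤ) := by
  rw [(commute_kleinU_kleinV_pow_two_mul k).mul_zpow, ← zpow_natCast, ← zpow_natCast,
    ← zpow_mul, ← zpow_mul, mul_assoc, ← zpow_add]
  push_cast
  rfl

lemma eq_zero_of_kleinU_mul_kleinV_pow_zpow_mul_kleinV_pow_zpow_eq_one (hk : k ≠ 0) {m l : ℤ}
    (h : (kleinU * kleinV ^ (2 * k)) ^ m * (kleinV ^ (4 * k)) ^ l = 1) : m = 0 ∧ l = 0 := by
  rw [kleinU_mul_kleinV_pow_zpow_mul_kleinV_pow_zpow, kleinU_zpow_mul_kleinV_zpow_eq_one_iff] at h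
  obtain ⟨rfl, h⟩ := h
  refine ⟨rfl, ?_⟩
  simp only [mul_zero, zero_add, mul_eq_zero] at h
  omega

lemma kleinU_zpow_mul_kleinV_zpow_mem_ker_iff (θ : KleinGroup →* Multiplicative (ZMod (4 * k)))
    (hu : θ kleinU = Multiplicative.ofAdd ((2 * k : ℕ) : ZMod (4 * k)))
    (hv : θ kleinV = Multiplicative.ofAdd (1 : ZMod (4 * k))) (a b : ℤ) :
    kleinU ^ a * kleinV ^ b ∈ θ.ker ↔ (4 * k : ℤ) ∣ 2 * k * a + b := by
  rw [MonoidHom.mem_ker, map_mul, map_zpow, map_zpow, hu, hv, ← ofAdd_zsmul, ← ofAdd_zsmul,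
    ← ofAdd_add, ofAdd_eq_one, zsmul_eq_mul, zsmul_eq_mul, mul_one,
    show (4 * k : ℤ) = (4 * k : ℕ) by push_cast; rfl, ← ZMod.intCast_zmod_eq_zero_iff_dvd]
  push_cast
  ring_nf

lemma closure_kleinU_mul_kleinV_pow_kleinV_pow_eq_ker
    (θ : KleinGroup →* Multiplicative (ZMod (4 * k)))
    (hu : θ kleinU = Multiplicative.ofAdd ((2 * k : ℕ) : ZMod (4 * k)))
    (hv : θ kleinV = Multiplicative.ofAdd (1 : ZMod (4 * k))) :
    Subgroup.closure {kleinU * kleinV ^ (2 * k), kleinV ^ (4 * k)} = θ.ker := by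
  have hcomm := commute_kleinU_mul_kleinV_pow_kleinV_pow k
  ext g
  rw [← hcomm.range_zpowPairHom]
  constructor
  · rintro ⟨p, rfl⟩
    rw [hcomm.zpowPairHom_apply, kleinU_mul_kleinV_pow_zpow_mul_kleinV_pow_zpow,
      kleinU_zpow_mul_kleinV_zpow_mem_ker_iff k θ hu hv]
    exact ⟨p.toAdd.1 + p.toAdd.2, by ring⟩
  · intro hg
    obtain ⟨a, b, rfl⟩ := exists_eq_kleinU_zpow_mul_kleinV_zpow g
    obtain ⟨s, hs⟩ := (kleinU_zpow_mul_kleinV_zpow_mem_ker_iff k θ hu hv a b).mp hg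
    refine ⟨.ofAdd (a, s - a), ?_⟩
    rw [hcomm.zpowPairHom_apply, kleinU_mul_kleinV_pow_zpow_mul_kleinV_pow_zpow]
    congr 2
    simp only [toAdd_ofAdd]
    linarith

end KernelOfTheta

/-- in the Klein bottle group `K = ⟨u, v | uvuv⁻¹ = 1⟩`, the subgroup generated
by `x := u v^{2k}` and `y := v^{4k}` is isomorphic to `ℤ²` (`x` and `y` commute and generate a
free abelian group of rank `2`), and it equals the kernel of the homomorphism
`θ : K → ℤ/4k` with `θ(u) = 2k` and `θ(v) = 1`. -/
theorem statement13 (k : ℕ) (hk : 1 ≤ k)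
    (θ : KleinGroup →* Multiplicative (ZMod (4 * k)))
    (hu : θ kleinU = Multiplicative.ofAdd ((2 * k : ℕ) : ZMod (4 * k)))
    (hv : θ kleinV = Multiplicative.ofAdd (1 : ZMod (4 * k))) :
    Commute (kleinU * kleinV ^ (2 * k)) (kleinV ^ (4 * k)) ∧
      (∀ m l : ℤ, (kleinU * kleinV ^ (2 * k)) ^ m * (kleinV ^ (4 * k)) ^ l = 1 →
        m = 0 ∧ l = 0) ∧
      Nonempty ((Subgroup.closure {kleinU * kleinV ^ (2 * k), kleinV ^ (4 * k)} :
        Subgroup KleinGroup) ≃* Multiplicative (ℤ × ℤ)) ∧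
      Subgroup.closure {kleinU * kleinV ^ (2 * k), kleinV ^ (4 * k)} = θ.ker := by
  have hcomm := commute_kleinU_mul_kleinV_pow_kleinV_pow k
  have hind : ∀ m l : ℤ, (kleinU * kleinV ^ (2 * k)) ^ m * (kleinV ^ (4 * k)) ^ l = 1 →
      m = 0 ∧ l = 0 := fun _ _ =>
    eq_zero_of_kleinU_mul_kleinV_pow_zpow_mul_kleinV_pow_zpow_eq_one k (by omega)
  exact ⟨hcomm, hind, ⟨hcomm.closurePairMulEquiv hind⟩,
    closure_kleinU_mul_kleinV_pow_kleinV_pow_eq_ker k θ hu hv⟩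
end

section
/- There exists a group homomorphism ψ from the Klein bottle group ⟨u, v | uvuv⁻¹ = 1⟩ to the braid group B_{4k}(ℝ²) whose composite with the permutation homomorphism B_{4k} → ℤ/(4k) (induced by sending σ_i to transpositions and reducing via the cyclic quotient on the subgroup of ℤ/(4k)-permutation braids) sends u to 2k and v to 1; equivalently, there exist α, β ∈ B_{4k}(ℝ²) with permutation equal to c^{2k} and c respectively (c the 4k-cycle (1,4k,…,2)) such that αβαβ⁻¹ = 1 in B_{4k}(ℝ²). -/
/-! Write `n = 4k` and `g = σ₁⋯σ_{n-1}`. Conjugation by `g²` sends `σ_i ↦ σ_{i+2}` for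
`i ≤ n - 3` and `σ_{n-1} ↦ σ₁`, so it permutes the commuting factors of `T = σ₁σ₃⋯σ_{n-1}`;
hence `g²` commutes with `T` and with `t = (gT)^k`. Then `β = g⁻¹` and `α = t⁻¹g⁻¹tg` satisfy
`αβαβ⁻¹ = t⁻¹g⁻²tg² = 1`.

The permutation of `g` is `c⁻¹`, and that of `gT` moves every odd point two steps along the
cycle while fixing the even points. So the permutation of `t` is multiplication by `2k + 1` on
`ℤ/4k`, which conjugates `c` to `c^{2k+1}` because `(2k + 1)² ≡ 1`; this makes `α` map to
`c^{2k}`. -/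

namespace BraidGroup

variable {n : ℕ}

lemma braidσ_commute {i j : ℕ} (hi : 1 ≤ i) (hij : i + 2 ≤ j) (hj : j ≤ n - 1) :
    Commute (braidσ n i) (braidσ n j) :=
  (PresentedGroup.mk_eq_mk_of_mul_inv_mem (rels := braidRels n)
    (x := .of i * .of j) (y := .of j * .of i) <|
    Or.inr <| Or.inl ⟨i, j, hi, hij, hj, by simp only [mul_inv_rev, mul_assoc]⟩ :)

lemma braidσ_braid {i : ℕ} (hi : 1 ≤ i) (hin : i + 2 ≤ n) :
    braidσ n i * braidσ n (i + 1) * braidσ n i =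
      braidσ n (i + 1) * braidσ n i * braidσ n (i + 1) :=
  PresentedGroup.mk_eq_mk_of_mul_inv_mem (Or.inr (Or.inr ⟨i, hi, hin, rfl⟩))

def sigmaPrefix (n : ℕ) : ℕ → BraidGroup n
  | 0 => 1
  | m + 1 => sigmaPrefix n m * braidσ n (m + 1)

lemma braidg_eq_sigmaPrefix : braidg n = sigmaPrefix n (n - 1) := by
  suffices ∀ m, ((List.range' 1 m).map (braidσ n)).prod = sigmaPrefix n m from this (n - 1)
  intro m
  induction m with
  | zero => rfl
  | succ m ih =>
    rw [List.range'_concat, List.map_append, List.prod_append, ih, one_mul, add_comm]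
    simp [sigmaPrefix]

lemma braidσ_commute_sigmaPrefix {j m : ℕ} (hmj : m + 2 ≤ j) (hj : j ≤ n - 1) :
    Commute (braidσ n j) (sigmaPrefix n m) := by
  induction m with
  | zero => exact Commute.one_right _
  | succ m ih =>
    exact (ih (by omega)).mul_right (braidσ_commute (by omega) hmj hj).symm

lemma sigmaPrefix_mul_braidσ {i m : ℕ} (hi : 1 ≤ i) (him : i < m) (hm : m ≤ n - 1) :
    sigmaPrefix n m * braidσ n i = braidσ n (i + 1) * sigmaPrefix n m := by
  induction m with
  | zero => omega
  | succ m ih =>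
    obtain rfl | him' := eq_or_lt_of_le (Nat.le_of_lt_succ him)
    · obtain ⟨m, rfl⟩ : ∃ m', i = m' + 1 := ⟨i - 1, by omega⟩
      set A := sigmaPrefix n m
      set a := braidσ n (m + 1)
      set b := braidσ n (m + 2)
      have hbA : b * A = A * b := (braidσ_commute_sigmaPrefix le_rfl hm).eq
      have hbraid : a * b * a = b * a * b := braidσ_braid (by omega) (by omega)
      show A * a * b * a = b * (A * a * b)
      calc A * a * b * a = A * (a * b * a) := by group
        _ = A * b * (a * b) := by rw [hbraid]; group
        _ = b * (A * a * b) := by rw [← hbA]; group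
    · calc sigmaPrefix n (m + 1) * braidσ n i
          = sigmaPrefix n m * braidσ n i * braidσ n (m + 1) := by
            rw [sigmaPrefix, mul_assoc, ← (braidσ_commute hi (by omega) hm).eq, mul_assoc]
        _ = braidσ n (i + 1) * sigmaPrefix n (m + 1) := by
            rw [ih him' (by omega), sigmaPrefix, mul_assoc]

lemma sigmaPrefix_succ_mul_sigmaPrefix_mul_braidσ {m : ℕ} (hm : m + 1 ≤ n - 1) :
    sigmaPrefix n (m + 1) * sigmaPrefix n m * braidσ n (m + 1) =
      braidσ n 1 * (sigmaPrefix n (m + 1) * sigmaPrefix n m) := by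
  induction m with
  | zero => simp [sigmaPrefix]
  | succ m ih =>
    set A := sigmaPrefix n m
    set a := braidσ n (m + 1)
    set b := braidσ n (m + 2)
    have hbA : b * A = A * b := (braidσ_commute_sigmaPrefix le_rfl hm).eq
    have hbraid : a * b * a = b * a * b := braidσ_braid (by omega) (by omega)
    have ih' : A * a * A * a = braidσ n 1 * (A * a * A) := ih (by omega)
    show A * a * b * (A * a) * b = braidσ n 1 * (A * a * b * (A * a))
    calc A * a * b * (A * a) * b = A * a * (b * A) * a * b := by group
      _ = A * a * A * (b * a * b) := by rw [hbA]; group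
      _ = A * a * A * a * (b * a) := by rw [← hbraid]; group
      _ = braidσ n 1 * (A * a * (A * b) * a) := by rw [ih']; group
      _ = braidσ n 1 * (A * a * b * (A * a)) := by rw [← hbA]; group

lemma braidg_mul_braidσ {i : ℕ} (hi : 1 ≤ i) (hin : i + 2 ≤ n) :
    braidg n * braidσ n i = braidσ n (i + 1) * braidg n := by
  rw [braidg_eq_sigmaPrefix]
  exact sigmaPrefix_mul_braidσ hi (by omega) le_rfl

lemma braidg_sq_mul_braidσ {i : ℕ} (hi : 1 ≤ i) (hin : i + 3 ≤ n) :
    braidg n ^ 2 * braidσ n i = braidσ n (i + 2) * braidg n ^ 2 := by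
  rw [sq, mul_assoc, braidg_mul_braidσ hi (by omega), ← mul_assoc,
    braidg_mul_braidσ (by omega) (by omega), mul_assoc]

lemma braidg_sq_mul_braidσ_last (hn : 2 ≤ n) :
    braidg n ^ 2 * braidσ n (n - 1) = braidσ n 1 * braidg n ^ 2 := by
  obtain ⟨m, hm⟩ : ∃ m, n - 1 = m + 1 := ⟨n - 2, by omega⟩
  have h := sigmaPrefix_succ_mul_sigmaPrefix_mul_braidσ (n := n) (m := m) (by omega)
  rw [braidg_eq_sigmaPrefix, hm, sq]
  calc sigmaPrefix n (m + 1) * sigmaPrefix n (m + 1) * braidσ n (m + 1)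
      = sigmaPrefix n (m + 1) * sigmaPrefix n m * braidσ n (m + 1) * braidσ n (m + 1) := by
        simp only [sigmaPrefix, mul_assoc]
    _ = braidσ n 1 * (sigmaPrefix n (m + 1) * sigmaPrefix n (m + 1)) := by
        rw [h]; simp only [sigmaPrefix, mul_assoc]

def sigmaStepTwo (n a : ℕ) : ℕ → BraidGroup n
  | 0 => 1
  | j + 1 => sigmaStepTwo n a j * braidσ n (a + 2 * j)

lemma braidg_sq_mul_sigmaStepTwo {a j : ℕ} (ha : 1 ≤ a) (hj : a + 2 * j + 1 ≤ n) :
    braidg n ^ 2 * sigmaStepTwo n a j = sigmaStepTwo n (a + 2) j * braidg n ^ 2 := by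
  induction j with
  | zero => simp [sigmaStepTwo]
  | succ j ih =>
    rw [sigmaStepTwo, ← mul_assoc, ih (by omega), mul_assoc,
      braidg_sq_mul_braidσ (by omega) (by omega), ← mul_assoc, sigmaStepTwo,
      show a + 2 * j + 2 = a + 2 + 2 * j by omega]

lemma braidσ_one_mul_sigmaStepTwo_three (j : ℕ) :
    braidσ n 1 * sigmaStepTwo n 3 j = sigmaStepTwo n 1 (j + 1) := by
  induction j with
  | zero => simp [sigmaStepTwo]
  | succ j ih =>
    rw [sigmaStepTwo, ← mul_assoc, ih, show 3 + 2 * j = 1 + 2 * (j + 1) by omega]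
    rfl

lemma braidσ_one_commute_sigmaStepTwo_three {j : ℕ} (hj : 2 * j + 2 ≤ n) :
    Commute (braidσ n 1) (sigmaStepTwo n 3 j) := by
  induction j with
  | zero => exact Commute.one_right _
  | succ j ih => exact (ih (by omega)).mul_right (braidσ_commute le_rfl (by omega) (by omega))

lemma braidg_sq_commute_sigmaStepTwo_one {j : ℕ} (hj : 1 ≤ j) (hn : n = 2 * j) :
    Commute (braidg n ^ 2) (sigmaStepTwo n 1 j) := by
  obtain ⟨j, rfl⟩ : ∃ j', j = j' + 1 := ⟨j - 1, by omega⟩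
  have hlast : 1 + 2 * j = n - 1 := by omega
  calc braidg n ^ 2 * sigmaStepTwo n 1 (j + 1)
      = sigmaStepTwo n 3 j * (braidg n ^ 2 * braidσ n (n - 1)) := by
        rw [sigmaStepTwo, ← mul_assoc, braidg_sq_mul_sigmaStepTwo le_rfl (by omega), hlast,
          mul_assoc]
    _ = sigmaStepTwo n 1 (j + 1) * braidg n ^ 2 := by
        rw [braidg_sq_mul_braidσ_last (by omega), ← mul_assoc,
          ← (braidσ_one_commute_sigmaStepTwo_three (by omega)).eq,
          braidσ_one_mul_sigmaStepTwo_three]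

section Permutation

variable (π : BraidGroup n →* Equiv.Perm ℕ)
  (hπ : ∀ i : ℕ, 1 ≤ i → i ≤ n - 1 → π (braidσ n i) = Equiv.swap i (i + 1))
include hπ

lemma map_sigmaPrefix_apply {m : ℕ} (hm : m ≤ n - 1) (x : ℕ) :
    π (sigmaPrefix n m) x = if x = m + 1 then 1 else if 1 ≤ x ∧ x ≤ m then x + 1 else x := by
  induction m generalizing x with
  | zero => simp only [sigmaPrefix, map_one, Equiv.Perm.one_apply]; split_ifs <;> omega
  | succ m ih =>
    rw [sigmaPrefix, map_mul, Equiv.Perm.mul_apply, hπ _ (by omega) (by omega),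
      Equiv.swap_apply_def]
    split_ifs <;> rw [ih (by omega)] <;> split_ifs <;> omega

lemma map_braidg_apply (hn : 1 ≤ n) (x : ℕ) :
    π (braidg n) x = if x = n then 1 else if 1 ≤ x ∧ x < n then x + 1 else x := by
  rw [braidg_eq_sigmaPrefix, map_sigmaPrefix_apply π hπ le_rfl]
  split_ifs <;> omega

lemma map_braidg_pow_apply (hn : 1 ≤ n) {m : ℕ} (hm : m ≤ n) (x : ℕ) :
    (π (braidg n) ^ m) x =
      if 1 ≤ x ∧ x ≤ n then (if x + m ≤ n then x + m else x + m - n) else x := by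
  induction m generalizing x with
  | zero => simp only [pow_zero, Equiv.Perm.one_apply]; split_ifs <;> omega
  | succ m ih =>
    rw [pow_succ', Equiv.Perm.mul_apply, ih (by omega), map_braidg_apply π hπ hn]
    split_ifs <;> omega

lemma map_braidg_eq_inv (hn : 1 ≤ n) {c : Equiv.Perm ℕ} (hc1 : c 1 = n)
    (hc2 : ∀ i : ℕ, 2 ≤ i → i ≤ n → c i = i - 1) (hc3 : ∀ i : ℕ, i = 0 ∨ n < i → c i = i) :
    π (braidg n) = c⁻¹ := by
  refine eq_inv_of_mul_eq_one_right (Equiv.ext fun x => ?_)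
  rw [Equiv.Perm.mul_apply, map_braidg_apply π hπ hn, Equiv.Perm.one_apply]
  split_ifs
  · rw [hc1]; omega
  · rw [hc2 _ (by omega) (by omega)]; omega
  · exact hc3 x (by omega)

lemma map_sigmaStepTwo_one_apply {j : ℕ} (hj : 2 * j ≤ n) (x : ℕ) :
    π (sigmaStepTwo n 1 j) x =
      if 1 ≤ x ∧ x ≤ 2 * j then (if x % 2 = 1 then x + 1 else x - 1) else x := by
  induction j generalizing x with
  | zero => simp only [sigmaStepTwo, map_one, Equiv.Perm.one_apply]; split_ifs <;> omega
  | succ j ih =>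
    rw [sigmaStepTwo, map_mul, Equiv.Perm.mul_apply, hπ _ (by omega) (by omega),
      Equiv.swap_apply_def]
    split_ifs <;> rw [ih (by omega)] <;> split_ifs <;> omega

lemma map_braidg_mul_sigmaStepTwo_pow_apply {j m : ℕ} (hn : n = 2 * j) (hj : 1 ≤ j)
    (hm : m ≤ j) (x : ℕ) :
    π ((braidg n * sigmaStepTwo n 1 j) ^ m) x =
      if x % 2 = 1 ∧ x ≤ n then (if x + 2 * m ≤ n then x + 2 * m else x + 2 * m - n) else x := by
  induction m generalizing x with
  | zero => simp only [pow_zero, map_one, Equiv.Perm.one_apply]; split_ifs <;> omega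
  | succ m ih =>
    rw [pow_succ', map_mul, Equiv.Perm.mul_apply, ih (by omega), map_mul, Equiv.Perm.mul_apply,
      map_sigmaStepTwo_one_apply π hπ (by omega), map_braidg_apply π hπ (by omega)]
    split_ifs <;> omega

lemma map_braidg_conj_eq_pow {k : ℕ} (hk : 1 ≤ k) (hn : n = 4 * k) :
    (π ((braidg n * sigmaStepTwo n 1 (2 * k)) ^ k))⁻¹ * π (braidg n) *
        π ((braidg n * sigmaStepTwo n 1 (2 * k)) ^ k) = π (braidg n) ^ (2 * k + 1) := by
  rw [mul_assoc, inv_mul_eq_iff_eq_mul]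
  ext x
  simp only [Equiv.Perm.mul_apply]
  rw [map_braidg_mul_sigmaStepTwo_pow_apply π hπ (by omega) (by omega) (by omega),
    map_braidg_apply π hπ (by omega), map_braidg_pow_apply π hπ (by omega) (by omega),
    map_braidg_mul_sigmaStepTwo_pow_apply π hπ (by omega) (by omega) (by omega)]
  split_ifs <;> omega

end Permutation

end BraidGroup

lemma klein_relation_of_commute_sq {G : Type*} [Group G] {d t : G} (h : Commute (d ^ 2) t) :
    t⁻¹ * d⁻¹ * t * d * d⁻¹ * (t⁻¹ * d⁻¹ * t * d) * d⁻¹⁻¹ = 1 :=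
  calc t⁻¹ * d⁻¹ * t * d * d⁻¹ * (t⁻¹ * d⁻¹ * t * d) * d⁻¹⁻¹
        = t⁻¹ * ((d ^ 2)⁻¹ * t) * d ^ 2 := by rw [sq]; group
    _ = 1 := by rw [h.inv_left.eq]; group

open BraidGroup in
/-- there exist `α, β ∈ B_{4k}(ℝ²)` whose permutations are `c^{2k}` and `c`
respectively, where `c` is the `4k`-cycle `(1, 4k, 4k-1, …, 2)` (the permutation sending
`1 ↦ 4k` and `i ↦ i-1` for `2 ≤ i ≤ 4k`, fixing everything else), such that `αβαβ⁻¹ = 1`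
in `B_{4k}(ℝ²)`.  Equivalently, there is a homomorphism from the Klein bottle group
`⟨u,v | uvuv⁻¹⟩` to `B_{4k}(ℝ²)` lifting `u ↦ 2k`, `v ↦ 1` through the permutation map. -/
theorem statement15 (k : ℕ) (hk : 1 ≤ k) (π : BraidGroup (4 * k) →* Equiv.Perm ℕ)
    (hπ : ∀ i : ℕ, 1 ≤ i → i ≤ 4 * k - 1 →
      π (braidσ (4 * k) i) = Equiv.swap i (i + 1))
    (c : Equiv.Perm ℕ) (hc1 : c 1 = 4 * k)
    (hc2 : ∀ i : ℕ, 2 ≤ i → i ≤ 4 * k → c i = i - 1)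
    (hc3 : ∀ i : ℕ, i = 0 ∨ 4 * k < i → c i = i) :
    ∃ α β : BraidGroup (4 * k),
      π α = c ^ (2 * k) ∧ π β = c ∧ α * β * α * β⁻¹ = 1 := by
  set g := braidg (4 * k)
  set t := (g * sigmaStepTwo (4 * k) 1 (2 * k)) ^ k
  have hg : π g = c⁻¹ := map_braidg_eq_inv π hπ (by omega) hc1 hc2 hc3
  have hconj : (π t)⁻¹ * π g * π t = π g ^ (2 * k + 1) := map_braidg_conj_eq_pow π hπ hk rfl
  have hcomm : Commute (g ^ 2) t :=
    ((Commute.self_pow g 2).symm.mul_right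
      (braidg_sq_commute_sigmaStepTwo_one (by omega) (by omega))).pow_right k
  refine ⟨t⁻¹ * g⁻¹ * t * g, g⁻¹, ?_, by rw [map_inv, hg, inv_inv],
    klein_relation_of_commute_sq hcomm⟩
  calc π (t⁻¹ * g⁻¹ * t * g) = ((π t)⁻¹ * π g * π t)⁻¹ * π g := by
        simp only [map_mul, map_inv]; group
    _ = c ^ (2 * k) := by rw [hconj, hg]; group
end

section
/- Consequently, the map h of the previous statement is injective on every orbit of the ℤ/(4k)-action on T² generated by τ(a,b) = (−a, a+b+1/(4k)): for all (a,b) ∈ T² and 0 ≤ i < j ≤ 4k−1, h(τ^i(a,b)) ≠ h(τ^j(a,b)). Hence the quadruple (T², ℤ/4k, τ; ℝ²) does not have the Borsuk-Ulam property. -/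
set_option maxHeartbeats 1000000


/-- The radius function `r : [0,1] → [1,2]` used to define the map `h : T² → ℝ²`:
`r(a) = (3−4a)/2` for `0 ≤ a ≤ 1/4`, `r(a) = (1+4a)/2` for `1/4 ≤ a ≤ 3/4`, and
`r(a) = (7−4a)/2` for `3/4 ≤ a ≤ 1`. -/
noncomputable def radiusR (a : ℝ) : ℝ :=
  if a ≤ 1 / 4 then (3 - 4 * a) / 2
  else if a ≤ 3 / 4 then (1 + 4 * a) / 2
  else (7 - 4 * a) / 2

/-- The map `τ : T² → T²`, `τ(a,b) = (−a, a + b + 1/(4k))`, on the torus `T² = ℝ²/ℤ²`. -/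
noncomputable def torusTau (k : ℕ) :
    UnitAddCircle × UnitAddCircle → UnitAddCircle × UnitAddCircle :=
  fun p => (-p.1, p.1 + p.2 + ((1 / (4 * (k : ℝ)) : ℝ) : UnitAddCircle))

lemma radiusR_one_le {a : ℝ} (h0 : 0 ≤ a) (h1 : a ≤ 1) : 1 ≤ radiusR a := by
  unfold radiusR; split_ifs <;> linarith

lemma radiusR_symm {a : ℝ} (h0 : 0 < a) (h1 : a < 1)
    (h : radiusR a = radiusR (1 - a)) : a = 1/2 := by
  unfold radiusR at h; split_ifs at h <;> linarith

lemma key2 (x : ℝ) (h : radiusR (Int.fract x) = radiusR (Int.fract (-x))) :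
    ∃ m : ℤ, 2 * x = m := by
  by_cases hx : Int.fract x = 0
  · refine ⟨2 * ⌊x⌋, ?_⟩
    rw [Int.fract] at hx
    push_cast
    linarith
  · rw [Int.fract_neg hx] at h
    have h0 : 0 < Int.fract x := (Int.fract_nonneg x).lt_of_ne (Ne.symm hx)
    have h1 : Int.fract x < 1 := Int.fract_lt_one x
    have h2 := radiusR_symm h0 h1 h
    rw [Int.fract] at h2
    exact ⟨2 * ⌊x⌋ + 1, by push_cast; linarith⟩

lemma cos_sin_eq {x y : ℝ} (hc : Real.cos (2*Real.pi*x) = Real.cos (2*Real.pi*y))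
    (hs : Real.sin (2*Real.pi*x) = Real.sin (2*Real.pi*y)) : ∃ n : ℤ, x = y + n := by
  have he : Complex.exp ((2*Real.pi*x : ℝ) * Complex.I)
      = Complex.exp ((2*Real.pi*y : ℝ) * Complex.I) := by
    rw [Complex.exp_mul_I, Complex.exp_mul_I, ← Complex.ofReal_cos, ← Complex.ofReal_cos,
      ← Complex.ofReal_sin, ← Complex.ofReal_sin, hc, hs]
  rw [Complex.exp_eq_exp_iff_exists_int] at he
  obtain ⟨n, hn⟩ := he
  refine ⟨n, ?_⟩
  have him := congrArg Complex.im hn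
  simp [Complex.add_im, Complex.mul_im] at him
  have hπ : (0:ℝ) < 2 * Real.pi := by positivity
  have := mul_left_cancel₀ (ne_of_gt hπ) (show 2*Real.pi*x = 2*Real.pi*(y + n) by
    push_cast at him ⊢; ring_nf at him ⊢; linarith)
  linarith [this]

lemma polar_eq {r1 r2 θ1 θ2 : ℝ} (h1 : 1 ≤ r1) (h2 : 1 ≤ r2)
    (hx : r1 * Real.cos θ1 = r2 * Real.cos θ2) (hy : r1 * Real.sin θ1 = r2 * Real.sin θ2) :
    r1 = r2 ∧ Real.cos θ1 = Real.cos θ2 ∧ Real.sin θ1 = Real.sin θ2 := by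
  have c1 := Real.sin_sq_add_cos_sq θ1
  have c2 := Real.sin_sq_add_cos_sq θ2
  have e1 : r1^2 = r2^2 := by
    linear_combination (r1*Real.cos θ1 + r2*Real.cos θ2)*hx
      + (r1*Real.sin θ1 + r2*Real.sin θ2)*hy - r1^2*c1 + r2^2*c2
  have e2 : (r1 - r2) * (r1 + r2) = 0 := by linear_combination e1
  have hr : r1 = r2 := by
    rcases mul_eq_zero.1 e2 with h | h
    · linarith
    · linarith
  subst hr
  have hne : r1 ≠ 0 := by linarith
  exact ⟨rfl, mul_left_cancel₀ hne hx, mul_left_cancel₀ hne hy⟩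

lemma coe_fract (x : ℝ) : ((Int.fract x : ℝ) : UnitAddCircle) = (x : UnitAddCircle) := by
  rw [← sub_eq_zero, ← AddCircle.coe_sub, AddCircle.coe_eq_zero_iff]
  exact ⟨-⌊x⌋, by rw [Int.fract, zsmul_eq_mul]; push_cast; ring⟩

lemma tau_iter (k : ℕ) (i : ℕ) (a b : ℝ) :
    (torusTau k)^[i] ((a : UnitAddCircle), (b : UnitAddCircle)) =
      ((((-1:ℝ)^i * a : ℝ) : UnitAddCircle),
       (((1 - (-1:ℝ)^i)/2 * a + b + i * (1/(4*(k:ℝ))) : ℝ) : UnitAddCircle)) := by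
  induction i with
  | zero => norm_num
  | succ n ih =>
    rw [Function.iterate_succ_apply', ih]
    unfold torusTau
    dsimp only
    rw [← AddCircle.coe_neg, ← AddCircle.coe_add, ← AddCircle.coe_add]
    have e1 : ((-1:ℝ)^(n+1) * a) = -((-1:ℝ)^n * a) := by ring
    have e2 : ((1 - (-1:ℝ)^(n+1))/2 * a + b + ((n+1 : ℕ) : ℝ) * (1/(4*(k:ℝ)))) =
        (-1:ℝ)^n * a + ((1 - (-1:ℝ)^n)/2 * a + b + (n : ℝ) * (1/(4*(k:ℝ)))) + 1/(4*(k:ℝ)) := by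
      push_cast; ring
    rw [e1, e2]

lemma main_inj (k : ℕ) (hk : 1 ≤ k)
    (h : UnitAddCircle × UnitAddCircle → ℝ × ℝ)
    (hh : ∀ a b : ℝ, 0 ≤ a → a ≤ 1 →
      h ((a : UnitAddCircle), (b : UnitAddCircle)) =
        (radiusR a * Real.cos (2 * Real.pi * b), radiusR a * Real.sin (2 * Real.pi * b)))
    (x : UnitAddCircle × UnitAddCircle) (i j : ℕ) (hij : i < j) (hj : j ≤ 4 * k - 1) :
    h ((torusTau k)^[i] x) ≠ h ((torusTau k)^[j] x) := by
  obtain ⟨x1, x2⟩ := x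
  obtain ⟨a, rfl⟩ := QuotientAddGroup.mk_surjective x1
  obtain ⟨b, rfl⟩ := QuotientAddGroup.mk_surjective x2
  have hk0 : (0:ℝ) < (k:ℝ) := by exact_mod_cast Nat.lt_of_lt_of_le Nat.zero_lt_one hk
  have h4 : (4*(k:ℝ)) ≠ 0 := by positivity
  set c : ℝ := 1/(4*(k:ℝ)) with hc
  have Hi : h ((torusTau k)^[i] ((a : UnitAddCircle), (b : UnitAddCircle)))
      = (radiusR (Int.fract ((-1:ℝ)^i*a)) * Real.cos (2*Real.pi*((1-(-1:ℝ)^i)/2*a + b + i*c)),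
         radiusR (Int.fract ((-1:ℝ)^i*a)) * Real.sin (2*Real.pi*((1-(-1:ℝ)^i)/2*a + b + i*c))) := by
    rw [tau_iter, ← coe_fract ((-1:ℝ)^i*a)]
    exact hh _ _ (Int.fract_nonneg _) (Int.fract_lt_one _).le
  have Hj : h ((torusTau k)^[j] ((a : UnitAddCircle), (b : UnitAddCircle)))
      = (radiusR (Int.fract ((-1:ℝ)^j*a)) * Real.cos (2*Real.pi*((1-(-1:ℝ)^j)/2*a + b + j*c)),
         radiusR (Int.fract ((-1:ℝ)^j*a)) * Real.sin (2*Real.pi*((1-(-1:ℝ)^j)/2*a + b + j*c))) := by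
    rw [tau_iter, ← coe_fract ((-1:ℝ)^j*a)]
    exact hh _ _ (Int.fract_nonneg _) (Int.fract_lt_one _).le
  intro heq
  rw [Hi, Hj, Prod.mk.injEq] at heq
  obtain ⟨hr, hcos, hsin⟩ := polar_eq
    (radiusR_one_le (Int.fract_nonneg _) (Int.fract_lt_one _).le)
    (radiusR_one_le (Int.fract_nonneg _) (Int.fract_lt_one _).le) heq.1 heq.2
  obtain ⟨n, hn⟩ := cos_sin_eq hcos hsin
  have hjlt : (j:ℤ) - i < 4*(k:ℤ) ∧ (0:ℤ) < (j:ℤ) - i := by omega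
  rcases Nat.even_or_odd i with hi | hi <;> rcases Nat.even_or_odd j with hjp | hjp
  · -- even, even
    rw [hi.neg_one_pow, hjp.neg_one_pow] at hn
    have h1 : ((i:ℝ) - j) * c = n := by linarith
    have h2 : (i:ℝ) - j = n * (4*k) := by
      rw [hc] at h1; field_simp at h1; linarith
    have hZ : (i:ℤ) - j = n * (4*k) := by exact_mod_cast h2
    have hd : (4*(k:ℤ)) ∣ ((j:ℤ) - i) := ⟨-n, by linarith⟩
    have := Int.le_of_dvd hjlt.2 hd
    omega
  · -- even i, odd j
    rw [hi.neg_one_pow, hjp.neg_one_pow] at hn hr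
    rw [one_mul, neg_one_mul] at hr
    obtain ⟨m, hm⟩ := key2 a hr
    -- hn : (1-1)/2*a + b + i*c = (1-(-1))/2*a + b + j*c + n
    have h1 : a = ((i:ℝ) - j) * c - n := by linarith
    have h2 : (i:ℝ) - j = (m + 2*n) * (2*k) := by
      rw [hc] at h1; field_simp at h1 ⊢; nlinarith [hm, h1]
    have hZ : (i:ℤ) - j = (m + 2*n) * (2*k) := by exact_mod_cast h2
    have ht : (i:ℤ) - j = 2*((m + 2*n) * k) := by rw [hZ]; ring
    obtain ⟨p, hp⟩ := hi
    obtain ⟨q, hq⟩ := hjp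
    omega
  · -- odd i, even j
    rw [hi.neg_one_pow, hjp.neg_one_pow] at hn hr
    rw [one_mul, neg_one_mul] at hr
    obtain ⟨m, hm⟩ := key2 a hr.symm
    have h1 : a = ((j:ℝ) - i) * c + n := by linarith
    have h2 : (j:ℝ) - i = (m - 2*n) * (2*k) := by
      rw [hc] at h1; field_simp at h1 ⊢; nlinarith [hm, h1]
    have hZ : (j:ℤ) - i = (m - 2*n) * (2*k) := by exact_mod_cast h2
    have ht : (j:ℤ) - i = 2*((m - 2*n) * k) := by rw [hZ]; ring
    obtain ⟨p, hp⟩ := hi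
    obtain ⟨q, hq⟩ := hjp
    omega
  · -- odd, odd
    rw [hi.neg_one_pow, hjp.neg_one_pow] at hn
    have h1 : ((i:ℝ) - j) * c = n := by linarith
    have h2 : (i:ℝ) - j = n * (4*k) := by
      rw [hc] at h1; field_simp at h1; linarith
    have hZ : (i:ℤ) - j = n * (4*k) := by exact_mod_cast h2
    have hd : (4*(k:ℤ)) ∣ ((j:ℤ) - i) := ⟨-n, by linarith⟩
    have := Int.le_of_dvd hjlt.2 hd
    omega

noncomputable def myF : UnitAddCircle × UnitAddCircle → ℝ × ℝ :=
  fun p => (AddCircle.liftIco 1 0 radiusR p.1 * ((AddCircle.toCircle p.2 : ℂ).re),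
            AddCircle.liftIco 1 0 radiusR p.1 * ((AddCircle.toCircle p.2 : ℂ).im))

lemma radiusR_eqOn :
    Set.EqOn radiusR (fun a => 1 + 2 * min |a - 1/4| (1 - |a - 1/4|)) (Set.Icc (0:ℝ) 1) := by
  intro a ha
  obtain ⟨h0, h1⟩ := ha
  unfold radiusR
  dsimp only
  split_ifs with hA hB
  · rw [abs_of_nonpos (by linarith), min_eq_left (by linarith)]; linarith
  · rw [abs_of_nonneg (by linarith), min_eq_left (by linarith)]; linarith
  · rw [abs_of_nonneg (by linarith), min_eq_right (by linarith)]; linarith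

lemma radiusR_contOn : ContinuousOn radiusR (Set.Icc (0:ℝ) 1) := by
  have hg : Continuous (fun a : ℝ => 1 + 2 * min |a - 1/4| (1 - |a - 1/4|)) := by
    apply continuous_const.add
    apply continuous_const.mul
    exact ((continuous_id.sub continuous_const).abs).min
      (continuous_const.sub (continuous_id.sub continuous_const).abs)
  exact hg.continuousOn.congr radiusR_eqOn

lemma myF_cont : Continuous myF := by
  have hRL : Continuous (AddCircle.liftIco 1 0 radiusR) := by
    apply AddCircle.liftIco_zero_continuous
    · norm_num [radiusR]
    · exact radiusR_contOn
  have hC : Continuous (fun y : UnitAddCircle => (AddCircle.toCircle y : ℂ)) :=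
    continuous_subtype_val.comp AddCircle.continuous_toCircle
  unfold myF
  exact ((hRL.comp continuous_fst).mul
      ((Complex.continuous_re.comp hC).comp continuous_snd)).prodMk
    ((hRL.comp continuous_fst).mul ((Complex.continuous_im.comp hC).comp continuous_snd))

lemma myF_eval : ∀ a b : ℝ, 0 ≤ a → a ≤ 1 →
    myF ((a : UnitAddCircle), (b : UnitAddCircle)) =
      (radiusR a * Real.cos (2 * Real.pi * b), radiusR a * Real.sin (2 * Real.pi * b)) := by
  intro a b h0 h1
  have hb : (AddCircle.toCircle ((b : ℝ) : UnitAddCircle) : ℂ)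
      = Complex.exp ((2 * Real.pi * b : ℝ) * Complex.I) := by
    rw [AddCircle.toCircle_apply_mk, Circle.coe_exp]
    norm_num
  have hA : AddCircle.liftIco 1 0 radiusR ((a : ℝ) : UnitAddCircle) = radiusR a := by
    by_cases ha1 : a < 1
    · exact AddCircle.liftIco_zero_coe_apply ⟨h0, ha1⟩
    · have ha : a = 1 := le_antisymm h1 (not_lt.1 ha1)
      subst ha
      have h01 : ((1:ℝ) : UnitAddCircle) = ((0:ℝ) : UnitAddCircle) := by
        rw [AddCircle.coe_period]
        norm_num
      rw [h01, AddCircle.liftIco_zero_coe_apply ⟨le_refl _, zero_lt_one⟩]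
      norm_num [radiusR]
  unfold myF
  dsimp only
  rw [hA, hb, Complex.exp_ofReal_mul_I_re, Complex.exp_ofReal_mul_I_im]


/-- any map `h : T² → ℝ²` given by the polar-coordinate formula
`h(a,b) = (r(a), 2πb)` is injective on every orbit of the `ℤ/4k`-action generated by
`τ(a,b) = (−a, a+b+1/(4k))`; hence there is a continuous map `T² → ℝ²` which is injective on
every orbit, i.e. the quadruple `(T², ℤ/4k, τ; ℝ²)` does not have the Borsuk–Ulam property. -/
theorem statement17 (k : ℕ) (hk : 1 ≤ k) :
    (∀ h : UnitAddCircle × UnitAddCircle → ℝ × ℝ,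
      (∀ a b : ℝ, 0 ≤ a → a ≤ 1 →
        h ((a : UnitAddCircle), (b : UnitAddCircle)) =
          (radiusR a * Real.cos (2 * Real.pi * b), radiusR a * Real.sin (2 * Real.pi * b))) →
      ∀ x : UnitAddCircle × UnitAddCircle, ∀ i j : ℕ, i < j → j ≤ 4 * k - 1 →
        h ((torusTau k)^[i] x) ≠ h ((torusTau k)^[j] x)) ∧
    (∃ f : UnitAddCircle × UnitAddCircle → ℝ × ℝ, Continuous f ∧
      ∀ x : UnitAddCircle × UnitAddCircle, ∀ i j : ℕ, i < j → j ≤ 4 * k - 1 →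
        f ((torusTau k)^[i] x) ≠ f ((torusTau k)^[j] x)) := by
  refine ⟨fun h hh x i j hij hj => main_inj k hk h hh x i j hij hj,
    ⟨myF, myF_cont, fun x i j hij hj => main_inj k hk myF myF_eval x i j hij hj⟩⟩
end

section
/- Let θ₂ : ⟨c, a₁, b₁ | c²[a₁,b₁] = 1⟩ → Σ_n (n > 2) be the homomorphism with θ₂(c) = (1,2) and θ₂(a₁) = θ₂(b₁) = (1,n,…,2). Then there do not exist x, y, z in the pure braid group P_n(ℝ²) such that (xσ₁)²·(yg)(zg)(yg)⁻¹(zg)⁻¹ = 1 in B_n(ℝ²), where g = σ₁⋯σ_{n-1}. Equivalently, there is no homomorphism ψ from the group ⟨c,a₁,b₁ | c²[a₁,b₁]⟩ to B_n(ℝ²) lifting θ₂ through the permutation map π : B_n → Σ_n. -/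
/-! Auxiliary machinery -/

/-- exponent-sum values -/
def braidf (n : ℕ) (i : ℕ) : Multiplicative ℤ :=
  Multiplicative.ofAdd (if 1 ≤ i ∧ i ≤ n - 1 then (1 : ℤ) else 0)

lemma braidf_rels (n : ℕ) : ∀ r ∈ braidRels n, FreeGroup.lift (braidf n) r = 1 := by
  rintro r (⟨i, hi, rfl⟩ | ⟨i, j, h1, h2, h3, rfl⟩ | ⟨i, h1, h2, rfl⟩)
  · simp only [FreeGroup.lift_apply_of, braidf]
    have : ¬ (1 ≤ i ∧ i ≤ n - 1) := by omega
    simp [this]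
  · simp only [map_mul, map_inv, FreeGroup.lift_apply_of]
    generalize braidf n i = a
    generalize braidf n j = b
    rw [mul_comm a b]; group
  · simp only [map_mul, map_inv, FreeGroup.lift_apply_of]
    have heq : braidf n (i+1) = braidf n i := by
      unfold braidf
      rw [if_pos ⟨by omega, by omega⟩, if_pos ⟨by omega, by omega⟩]
    rw [heq]; group

/-- The exponent sum homomorphism `B_n → ℤ`. -/
def braidε (n : ℕ) : BraidGroup n →* Multiplicative ℤ := PresentedGroup.toGroup (braidf_rels n)

lemma braidσ_irrel (n i : ℕ) (hi : i = 0 ∨ n ≤ i) : braidσ n i = 1 := by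
  show PresentedGroup.mk (braidRels n) (FreeGroup.of i) = 1
  have : FreeGroup.of i ∈ Subgroup.normalClosure (braidRels n) :=
    Subgroup.subset_normalClosure (Or.inl ⟨i, hi, rfl⟩)
  exact (QuotientGroup.eq_one_iff _).mpr this

/-- permutation values in the finite permutation group `Perm (Fin (n+1))` -/
def braidp (n : ℕ) (i : ℕ) : Equiv.Perm (Fin (n + 1)) :=
  if h : 1 ≤ i ∧ i ≤ n - 1 then
    Equiv.swap ⟨i, by omega⟩ ⟨i + 1, by omega⟩ else 1

lemma braidp_rels (n : ℕ) (hn : 2 < n) :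
    ∀ r ∈ braidRels n, FreeGroup.lift (braidp n) r = 1 := by
  rintro r (⟨i, hi, rfl⟩ | ⟨i, j, h1, h2, h3, rfl⟩ | ⟨i, h1, h2, rfl⟩)
  · simp only [FreeGroup.lift_apply_of, braidp]
    have : ¬ (1 ≤ i ∧ i ≤ n - 1) := by omega
    simp [this]
  · simp only [map_mul, map_inv, FreeGroup.lift_apply_of]
    have hij : 1 ≤ j ∧ j ≤ n - 1 := ⟨by omega, h3⟩
    rw [braidp, braidp, dif_pos ⟨h1, by omega⟩, dif_pos hij]
    set a : Fin (n+1) := ⟨i, by omega⟩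
    set b : Fin (n+1) := ⟨i+1, by omega⟩
    set c : Fin (n+1) := ⟨j, by omega⟩
    set d : Fin (n+1) := ⟨j+1, by omega⟩
    have hcomm : Equiv.swap a b * Equiv.swap c d = Equiv.swap c d * Equiv.swap a b := by
      rw [Equiv.mul_swap_eq_swap_mul]
      have hca : Equiv.swap a b c = c :=
        Equiv.swap_apply_of_ne_of_ne (by simp [a, b, c, Fin.ext_iff]; omega)
          (by simp [a, b, c, Fin.ext_iff]; omega)
      have hda : Equiv.swap a b d = d :=
        Equiv.swap_apply_of_ne_of_ne (by simp [a, b, d, Fin.ext_iff]; omega)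
          (by simp [a, b, d, Fin.ext_iff]; omega)
      rw [hca, hda]
    rw [hcomm]; group
  · simp only [map_mul, map_inv, FreeGroup.lift_apply_of]
    have hi1 : 1 ≤ i + 1 ∧ i + 1 ≤ n - 1 := ⟨by omega, by omega⟩
    rw [braidp, braidp, dif_pos ⟨h1, by omega⟩, dif_pos hi1]
    set a : Fin (n+1) := ⟨i, by omega⟩
    set b : Fin (n+1) := ⟨i+1, by omega⟩
    set c : Fin (n+1) := ⟨i+1+1, by omega⟩
    have hab : a ≠ b := by simp [a, b, Fin.ext_iff]
    have hac : a ≠ c := by simp [a, c, Fin.ext_iff]; omega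
    have hbc : b ≠ c := by simp [b, c, Fin.ext_iff]
    have h1' : Equiv.swap a b * Equiv.swap b c * Equiv.swap a b = Equiv.swap a c := by
      have := Equiv.swap_mul_swap_mul_swap (x := c) (y := b) (z := a) hbc.symm hac.symm
      rwa [Equiv.swap_comm b a, Equiv.swap_comm c b] at this
    have h2' : Equiv.swap b c * Equiv.swap a b * Equiv.swap b c = Equiv.swap c a :=
      Equiv.swap_mul_swap_mul_swap hab hac
    rw [mul_assoc (Equiv.swap a b), ← mul_assoc, h1', h2', Equiv.swap_comm c a]
    group

/-- `π` restricted to finite support: `B_n → Perm (Fin (n+1))`. -/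
noncomputable def braidπF (n : ℕ) (hn : 2 < n) : BraidGroup n →* Equiv.Perm (Fin (n + 1)) :=
  PresentedGroup.toGroup (braidp_rels n hn)

lemma sign_comp_braidπF (n : ℕ) (hn : 2 < n) :
    (Equiv.Perm.sign).comp (braidπF n hn) = (zpowersHom ℤˣ (-1)).comp (braidε n) := by
  apply PresentedGroup.ext
  intro i
  simp only [MonoidHom.comp_apply]
  rw [show braidπF n hn (PresentedGroup.of i) = braidp n i from PresentedGroup.toGroup.of _,
    show braidε n (PresentedGroup.of i) = braidf n i from PresentedGroup.toGroup.of _]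
  by_cases h : 1 ≤ i ∧ i ≤ n - 1
  · rw [braidp, dif_pos h, Equiv.Perm.sign_swap (by simp [Fin.ext_iff])]
    simp [braidf, h, zpowersHom_apply]
  · rw [braidp, dif_neg h]
    simp [braidf, h, zpowersHom_apply]

/-- for `n > 2`, there do not exist pure braids `x, y, z ∈ P_n(ℝ²)` (elements of
the kernel of the permutation homomorphism `π : B_n(ℝ²) → Σ_n`) such that
`(xσ₁)² (yg)(zg)(yg)⁻¹(zg)⁻¹ = 1` in `B_n(ℝ²)`, where `g = σ₁⋯σ_{n-1}`.  Equivalently, there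
is no homomorphism `ψ` from `⟨c, a₁, b₁ | c²[a₁,b₁] = 1⟩` to `B_n(ℝ²)` lifting, through `π`,
the homomorphism `θ₂` with `θ₂(c) = (1,2)` and `θ₂(a₁) = θ₂(b₁) = (1,n,…,2)`. -/
theorem statement18 (n : ℕ) (hn : 2 < n) (π : BraidGroup n →* Equiv.Perm ℕ)
    (hπ : ∀ i : ℕ, 1 ≤ i → i ≤ n - 1 → π (braidσ n i) = Equiv.swap i (i + 1)) :
    ¬ ∃ x y z : BraidGroup n, x ∈ π.ker ∧ y ∈ π.ker ∧ z ∈ π.ker ∧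
        (x * braidσ n 1) * (x * braidσ n 1) * (y * braidg n) * (z * braidg n) *
          (y * braidg n)⁻¹ * (z * braidg n)⁻¹ = 1 := by
  rintro ⟨x, y, z, hx, hy, hz, hrel⟩
  -- π factors through the finite permutation group
  have hfac : π = (Equiv.Perm.viaEmbeddingHom (Fin.valEmbedding)).comp (braidπF n hn) := by
    apply PresentedGroup.ext
    intro i
    simp only [MonoidHom.comp_apply]
    rw [show braidπF n hn (PresentedGroup.of i) = braidp n i from PresentedGroup.toGroup.of _]
    by_cases h : 1 ≤ i ∧ i ≤ n - 1
    · rw [show (PresentedGroup.of i : BraidGroup n) = braidσ n i from rfl, hπ i h.1 h.2,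
        braidp, dif_pos h, Equiv.Perm.viaEmbeddingHom_apply, viaEmbedding_swap]
      rfl
    · rw [show (PresentedGroup.of i : BraidGroup n) = braidσ n i from rfl,
        braidσ_irrel n i (by omega), braidp, dif_neg h]
      simp
  -- hence x, being pure, has trivial image in Perm (Fin (n+1))
  have hxF : braidπF n hn x = 1 := by
    apply Equiv.Perm.viaEmbeddingHom_injective Fin.valEmbedding
    rw [map_one, ← MonoidHom.comp_apply, ← hfac]
    exact MonoidHom.mem_ker.mp hx
  -- exponent sum of σ₁
  have hεσ1 : Multiplicative.toAdd (braidε n (braidσ n 1)) = 1 := by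
    rw [show braidε n (braidσ n 1) = braidf n 1 from PresentedGroup.toGroup.of _]
    simp [braidf]
    omega
  -- applying ε to the relation gives ε x = -1
  have hε := congrArg (fun w => Multiplicative.toAdd (braidε n w)) hrel
  simp only [map_mul, map_inv, map_one, toAdd_mul, toAdd_inv, toAdd_one] at hε
  have hεx : Multiplicative.toAdd (braidε n x) = -1 := by
    rw [hεσ1] at hε; linarith
  -- but ε x must be even since x is pure
  have h2 : (1 : ℤˣ) = (-1 : ℤˣ) ^ (Multiplicative.toAdd (braidε n x)) := by
    have := congrArg (fun f => f x) (sign_comp_braidπF n hn)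
    simp only [MonoidHom.comp_apply, hxF, map_one, zpowersHom_apply] at this
    exact this
  rw [hεx] at h2
  simp at h2
end
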